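/- Let k be a field of characteristic ≠ 2 containing i with i²=−1, let n ≥ 4 be even, and let R = k[[x,y,z]]/(z²+x²y+y^{n−1}). Then in R, the intersection of the ideals (x+iy^{(n−2)/2}, xy−iy^{n/2}, z) and (x−iy^{(n−2)/2}, xy+iy^{n/2}, z) equals (x², xy, y^{n/2}, z). -/

import Mathlib

open MvPowerSeries Finsupp


lemma mem_span_X_of_constantCoeff_zero {k : Type*} [Field k]
    (f : MvPowerSeries (Fin 3) k) (hf : MvPowerSeries.constantCoeff f = 0) :
    ∃ g0 g1 g2 : MvPowerSeries (Fin 3) k,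
      f = MvPowerSeries.X 0 * g0 + MvPowerSeries.X 1 * g1 + MvPowerSeries.X 2 * g2 := by
  classical
  set g0 : MvPowerSeries (Fin 3) k := fun d => coeff (d + single 0 1) f with hg0
  set g1 : MvPowerSeries (Fin 3) k :=
      (fun d => if d 0 = 0 then coeff (d + single 1 1) f else 0) with hg1
  set g2 : MvPowerSeries (Fin 3) k :=
      (fun d => if d 0 = 0 ∧ d 1 = 0 then coeff (d + single 2 1) f else 0) with hg2
  have hX : ∀ s : Fin 3, (X s : MvPowerSeries (Fin 3) k) = monomial (single s 1) 1 :=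
    fun s => rfl
  have sub_app : ∀ (e : Fin 3 →₀ ℕ) (s t : Fin 3), s ≠ t →
      ((e - single s 1 : Fin 3 →₀ ℕ)) t = e t := by
    intro e s t hst
    rw [tsub_apply, single_apply, if_neg hst, Nat.sub_zero]
  have key : f = X 0 * g0 + X 1 * g1 + X 2 * g2 := by
    ext d
    rw [map_add, map_add, hX 0, hX 1, hX 2, coeff_monomial_mul, coeff_monomial_mul,
      coeff_monomial_mul]
    simp only [single_le_iff, one_mul, coeff_apply]
    have V0 : (if 1 ≤ d 0 then g0 (d - single 0 1) else 0)
        = if 1 ≤ d 0 then f d else 0 := by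
      split
      · rw [hg0]
        simp only [coeff_apply]
        congr 1
        exact tsub_add_cancel_of_le (single_le_iff.mpr (by assumption))
      · rfl
    have V1 : (if 1 ≤ d 1 then g1 (d - single 1 1) else 0)
        = if d 0 = 0 ∧ 1 ≤ d 1 then f d else 0 := by
      rw [hg1]
      simp only [coeff_apply]
      by_cases h1 : 1 ≤ d 1
      · rw [if_pos h1, sub_app d 1 0 (by decide)]
        by_cases h0 : d 0 = 0
        · rw [if_pos h0, if_pos ⟨h0, h1⟩]
          congr 1
          exact tsub_add_cancel_of_le (single_le_iff.mpr h1)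
        · rw [if_neg h0, if_neg (by tauto)]
      · rw [if_neg h1, if_neg (by tauto)]
    have V2 : (if 1 ≤ d 2 then g2 (d - single 2 1) else 0)
        = if d 0 = 0 ∧ d 1 = 0 ∧ 1 ≤ d 2 then f d else 0 := by
      rw [hg2]
      simp only [coeff_apply]
      by_cases h2 : 1 ≤ d 2
      · rw [if_pos h2, sub_app d 2 0 (by decide), sub_app d 2 1 (by decide)]
        by_cases h01 : d 0 = 0 ∧ d 1 = 0
        · rw [if_pos h01, if_pos ⟨h01.1, h01.2, h2⟩]
          congr 1
          exact tsub_add_cancel_of_le (single_le_iff.mpr h2)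
        · rw [if_neg h01, if_neg (by tauto)]
      · rw [if_neg h2, if_neg (by tauto)]
    rw [V0, V1, V2]
    by_cases h0 : 1 ≤ d 0
    · rw [if_pos h0, if_neg (by omega), if_neg (by omega), add_zero, add_zero]
    · rw [if_neg h0]
      by_cases h1 : 1 ≤ d 1
      · rw [if_pos (by omega), if_neg (by omega), zero_add, add_zero]
      · rw [if_neg (by omega)]
        by_cases h2 : 1 ≤ d 2
        · rw [if_pos (by omega), zero_add, zero_add]
        · rw [if_neg (by omega)]
          have hd : d = 0 := by
            ext s
            fin_cases s <;> simp <;> omega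
          subst hd
          have h00 : coeff (0 : Fin 3 →₀ ℕ) f = 0 := by
            rw [coeff_zero_eq_constantCoeff_apply]; exact hf
          simpa [MvPowerSeries.coeff_apply] using h00
  exact ⟨g0, g1, g2, key⟩


lemma vanish_on_L {k : Type*} [Field k] (m : ℕ) (f : MvPowerSeries (Fin 3) k)
    (hf : f ∈ Ideal.span {MvPowerSeries.X 0 ^ 2, MvPowerSeries.X 0 * MvPowerSeries.X 1,
      MvPowerSeries.X 1 ^ (m + 2), (MvPowerSeries.X 2 : MvPowerSeries (Fin 3) k)}) :
    (∀ j ≤ m + 1, coeff (single 1 j) f = 0) ∧ coeff (single 0 1) f = 0 := by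
  classical
  refine Submodule.span_induction ?_ ?_ ?_ ?_ hf
  · -- generators
    intro g hg
    have e1 : (X 0 ^ 2 : MvPowerSeries (Fin 3) k) = monomial (single 0 2) 1 := X_pow_eq 0 2
    have e2 : (X 0 * X 1 : MvPowerSeries (Fin 3) k)
        = monomial (single 0 1 + single 1 1) 1 := by
      rw [show (X 0 : MvPowerSeries (Fin 3) k) = monomial (single 0 1) 1 from rfl,
        show (X 1 : MvPowerSeries (Fin 3) k) = monomial (single 1 1) 1 from rfl,
        monomial_mul_monomial, one_mul]
    have e3 : (X 1 ^ (m + 2) : MvPowerSeries (Fin 3) k) = monomial (single 1 (m + 2)) 1 :=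
      X_pow_eq 1 (m + 2)
    have e4 : (X 2 : MvPowerSeries (Fin 3) k) = monomial (single 2 1) 1 := rfl
    rcases hg with rfl | rfl | rfl | rfl
    · constructor
      · intro j hj
        rw [e1, coeff_monomial, if_neg (fun h => by simpa using DFunLike.congr_fun h 0)]
      · rw [e1, coeff_monomial, if_neg (fun h => by simpa using DFunLike.congr_fun h 0)]
    · constructor
      · intro j hj
        rw [e2, coeff_monomial, if_neg (fun h => by simpa using DFunLike.congr_fun h 0)]
      · rw [e2, coeff_monomial, if_neg (fun h => by simpa using DFunLike.congr_fun h 1)]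
    · constructor
      · intro j hj
        rw [e3, coeff_monomial,
          if_neg (fun h => by have := DFunLike.congr_fun h 1; simp at this; omega)]
      · rw [e3, coeff_monomial, if_neg (fun h => by simpa using DFunLike.congr_fun h 1)]
    · constructor
      · intro j hj
        rw [e4, coeff_monomial, if_neg (fun h => by simpa using DFunLike.congr_fun h 2)]
      · rw [e4, coeff_monomial, if_neg (fun h => by simpa using DFunLike.congr_fun h 2)]
  · exact ⟨fun j _ => map_zero _, map_zero _⟩
  · rintro p q hp hq ⟨hp1, hp2⟩ ⟨hq1, hq2⟩
    exact ⟨fun j hj => by rw [map_add, hp1 j hj, hq1 j hj, add_zero],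
      by rw [map_add, hp2, hq2, add_zero]⟩
  · rintro a g hg ⟨h1, h2⟩
    rw [smul_eq_mul]
    constructor
    · intro j hj
      rw [coeff_mul, antidiagonal_single, Finset.sum_map]
      refine Finset.sum_eq_zero ?_
      rintro ⟨u, v⟩ huv
      have hadd : u + v = j := Finset.HasAntidiagonal.mem_antidiagonal.mp huv
      simp only [Function.Embedding.coe_prodMap, Function.Embedding.coeFn_mk, Prod.map_fst, Prod.map_snd]
      rw [h1 v (by omega), mul_zero]
    · rw [coeff_mul, antidiagonal_single, Finset.sum_map]
      refine Finset.sum_eq_zero ?_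
      rintro ⟨u, v⟩ huv
      have hadd : u + v = 1 := Finset.HasAntidiagonal.mem_antidiagonal.mp huv
      simp only [Function.Embedding.coe_prodMap, Function.Embedding.coeFn_mk, Prod.map_fst, Prod.map_snd]
      rcases Nat.le_one_iff_eq_zero_or_eq_one.mp (by omega : v ≤ 1) with h | h
      · rw [h, single_zero, ← single_zero (1 : Fin 3), h1 0 (by omega), mul_zero]
      · rw [h, h2, mul_zero]



/-- The two-dimensional `Dₙ`-singularity `R = k⟦x,y,z⟧/(z² + x²y + y^(n-1))`. -/
noncomputable abbrev Dn2 (k : Type*) [Field k] (n : ℕ) : Type _ :=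
  MvPowerSeries (Fin 3) k ⧸
    Ideal.span {(MvPowerSeries.X 2 : MvPowerSeries (Fin 3) k) ^ 2
      + MvPowerSeries.X 0 ^ 2 * MvPowerSeries.X 1 + MvPowerSeries.X 1 ^ (n - 1)}

/-- The image of `x` in `R = k⟦x,y,z⟧/(z² + x²y + y^(n-1))`. -/
noncomputable def x14 (k : Type*) [Field k] (n : ℕ) : Dn2 k n :=
  Ideal.Quotient.mk _ (MvPowerSeries.X 0 : MvPowerSeries (Fin 3) k)

/-- The image of `y` in `R = k⟦x,y,z⟧/(z² + x²y + y^(n-1))`. -/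
noncomputable def y14 (k : Type*) [Field k] (n : ℕ) : Dn2 k n :=
  Ideal.Quotient.mk _ (MvPowerSeries.X 1 : MvPowerSeries (Fin 3) k)

/-- The image of `z` in `R = k⟦x,y,z⟧/(z² + x²y + y^(n-1))`. -/
noncomputable def z14 (k : Type*) [Field k] (n : ℕ) : Dn2 k n :=
  Ideal.Quotient.mk _ (MvPowerSeries.X 2 : MvPowerSeries (Fin 3) k)

/-- The image of a scalar `i ∈ k` in `R = k⟦x,y,z⟧/(z² + x²y + y^(n-1))`. -/
noncomputable def c14 (k : Type*) [Field k] (n : ℕ) (i : k) : Dn2 k n :=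
  Ideal.Quotient.mk _ (MvPowerSeries.C i : MvPowerSeries (Fin 3) k)

set_option maxHeartbeats 1000000 in
/-- Let `k` be a field of characteristic `≠ 2` containing `i` with
`i² = -1`, let `n ≥ 4` be even, and `R = k⟦x,y,z⟧/(z² + x²y + y^(n-1))`.  Then the
intersection of the ideals `(x + iy^((n-2)/2), xy - iy^(n/2), z)` and
`(x - iy^((n-2)/2), xy + iy^(n/2), z)` equals `(x², xy, y^(n/2), z)`. -/
theorem trace_ideal_intersection_Dn_even
    (k : Type*) [Field k] (h2 : (2 : k) ≠ 0) (i : k) (hi : i ^ 2 = -1)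
    (n : ℕ) (hn : 4 ≤ n) (heven : Even n) :
    Ideal.span {x14 k n + c14 k n i * (y14 k n) ^ ((n - 2) / 2),
          x14 k n * y14 k n - c14 k n i * (y14 k n) ^ (n / 2), z14 k n}
        ⊓ Ideal.span {x14 k n - c14 k n i * (y14 k n) ^ ((n - 2) / 2),
          x14 k n * y14 k n + c14 k n i * (y14 k n) ^ (n / 2), z14 k n}
      = Ideal.span {(x14 k n) ^ 2, x14 k n * y14 k n, (y14 k n) ^ (n / 2), z14 k n} := by
  obtain ⟨m, hm2, hm1, hm0⟩ : ∃ m, (n - 2) / 2 = m + 1 ∧ n / 2 = m + 2 ∧ n = 2 * m + 4 := by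
    obtain ⟨t, rfl⟩ := heven
    exact ⟨t - 2, by omega, by omega, by omega⟩
  rw [hm2, hm1]
  set x := x14 k n with hx
  set y := y14 k n with hy
  set z := z14 k n with hz
  set ii := c14 k n i with hii
  -- scalar arithmetic in the quotient
  have hcmul : ∀ a b : k, c14 k n a * c14 k n b = c14 k n (a * b) := by
    intro a b; simp only [c14, ← map_mul]
  have hc1 : c14 k n 1 = 1 := by simp [c14]
  have h2Q : (2 : Dn2 k n) = c14 k n 2 :=
    (map_ofNat ((Ideal.Quotient.mk _).comp (MvPowerSeries.C : k →+* MvPowerSeries (Fin 3) k)) 2).symm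
  have hi0 : i ≠ 0 := fun h => by rw [h] at hi; norm_num at hi
  have hii2 : ii ^ 2 = -1 := by
    rw [hii, c14, ← map_pow, ← map_pow, hi]
    simp
  set u := c14 k n (2⁻¹) with hu'
  have hu : u * 2 = 1 := by
    rw [hu', h2Q, hcmul, inv_mul_cancel₀ h2, hc1]
  set v := c14 k n ((2 * i)⁻¹) with hv'
  have hv : v * (2 * ii) = 1 := by
    rw [hv', hii, h2Q, ← mul_assoc, hcmul, hcmul,
      show (2 * i)⁻¹ * 2 * i = 1 by field_simp, hc1]
  -- the two ideals and the target ideal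
  set A1 := x + ii * y ^ (m + 1) with hA1'
  set C1 := x * y - ii * y ^ (m + 2) with hC1'
  set B1 := x - ii * y ^ (m + 1) with hB1'
  set C2 := x * y + ii * y ^ (m + 2) with hC2'
  set I1 := Ideal.span {A1, C1, z} with hI1'
  set I2 := Ideal.span {B1, C2, z} with hI2'
  set K := Ideal.span {x ^ 2, x * y, y ^ (m + 2), z} with hK'
  have hA1 : A1 ∈ I1 := Ideal.subset_span (Set.mem_insert _ _)
  have hC1 : C1 ∈ I1 :=
    Ideal.subset_span (Set.mem_insert_iff.mpr (Or.inr (Set.mem_insert _ _)))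
  have hz1 : z ∈ I1 :=
    Ideal.subset_span (Set.mem_insert_iff.mpr (Or.inr (Set.mem_insert_iff.mpr (Or.inr rfl))))
  have hB1 : B1 ∈ I2 := Ideal.subset_span (Set.mem_insert _ _)
  have hC2 : C2 ∈ I2 :=
    Ideal.subset_span (Set.mem_insert_iff.mpr (Or.inr (Set.mem_insert _ _)))
  have hz2 : z ∈ I2 :=
    Ideal.subset_span (Set.mem_insert_iff.mpr (Or.inr (Set.mem_insert_iff.mpr (Or.inr rfl))))
  have hxyI1 : x * y ∈ I1 := by
    have e : x * y = u * (y * A1 + C1) := by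
      rw [hA1', hC1']; linear_combination (-(x * y)) * hu
    rw [e]
    exact Ideal.mul_mem_left _ _ (Ideal.add_mem _ (Ideal.mul_mem_left _ _ hA1) hC1)
  have hyI1 : y ^ (m + 2) ∈ I1 := by
    have e : y ^ (m + 2) = v * (y * A1 - C1) := by
      rw [hA1', hC1']; linear_combination (-(y ^ (m + 2))) * hv
    rw [e]
    exact Ideal.mul_mem_left _ _ (Ideal.sub_mem _ (Ideal.mul_mem_left _ _ hA1) hC1)
  have hx2I1 : x ^ 2 ∈ I1 := by
    have e : x ^ 2 = B1 * A1 - y ^ m * y ^ (m + 2) := by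
      rw [hA1', hB1']; linear_combination (y ^ (2 * m + 2)) * hii2
    rw [e]
    exact Ideal.sub_mem _ (Ideal.mul_mem_left _ _ hA1) (Ideal.mul_mem_left _ _ hyI1)
  have hxyI2 : x * y ∈ I2 := by
    have e : x * y = u * (y * B1 + C2) := by
      rw [hB1', hC2']; linear_combination (-(x * y)) * hu
    rw [e]
    exact Ideal.mul_mem_left _ _ (Ideal.add_mem _ (Ideal.mul_mem_left _ _ hB1) hC2)
  have hyI2 : y ^ (m + 2) ∈ I2 := by
    have e : y ^ (m + 2) = v * (C2 - y * B1) := by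
      rw [hB1', hC2']; linear_combination (-(y ^ (m + 2))) * hv
    rw [e]
    exact Ideal.mul_mem_left _ _ (Ideal.sub_mem _ hC2 (Ideal.mul_mem_left _ _ hB1))
  have hx2I2 : x ^ 2 ∈ I2 := by
    have e : x ^ 2 = A1 * B1 - y ^ m * y ^ (m + 2) := by
      rw [hA1', hB1']; linear_combination (y ^ (2 * m + 2)) * hii2
    rw [e]
    exact Ideal.sub_mem _ (Ideal.mul_mem_left _ _ hB1) (Ideal.mul_mem_left _ _ hyI2)
  have hKle : K ≤ I1 ⊓ I2 := by
    rw [hK', Ideal.span_le]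
    rintro w hw
    simp only [Set.mem_insert_iff, Set.mem_singleton_iff] at hw
    rcases hw with rfl | rfl | rfl | rfl
    · exact Submodule.mem_inf.mpr ⟨hx2I1, hx2I2⟩
    · exact Submodule.mem_inf.mpr ⟨hxyI1, hxyI2⟩
    · exact Submodule.mem_inf.mpr ⟨hyI1, hyI2⟩
    · exact Submodule.mem_inf.mpr ⟨hz1, hz2⟩
  refine le_antisymm (fun f hf => ?_) hKle
  rw [Submodule.mem_inf] at hf
  obtain ⟨hf1, hf2⟩ := hf
  rw [hI1', Ideal.mem_span_insert] at hf1
  obtain ⟨p, w1, hw1, hfw1⟩ := hf1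
  rw [Ideal.mem_span_pair] at hw1
  obtain ⟨q1, r1, hqr1⟩ := hw1
  rw [hI2', Ideal.mem_span_insert] at hf2
  obtain ⟨p', w2, hw2, hfw2⟩ := hf2
  rw [Ideal.mem_span_pair] at hw2
  obtain ⟨q2, r2, hqr2⟩ := hw2
  -- basic memberships in K
  have hx2K : x ^ 2 ∈ K := Ideal.subset_span (Set.mem_insert _ _)
  have hxyK : x * y ∈ K :=
    Ideal.subset_span (Set.mem_insert_iff.mpr (Or.inr (Set.mem_insert _ _)))
  have hyK : y ^ (m + 2) ∈ K :=
    Ideal.subset_span (Set.mem_insert_iff.mpr (Or.inr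
      (Set.mem_insert_iff.mpr (Or.inr (Set.mem_insert _ _)))))
  have hzK : z ∈ K :=
    Ideal.subset_span (Set.mem_insert_iff.mpr (Or.inr (Set.mem_insert_iff.mpr (Or.inr
      (Set.mem_insert_iff.mpr (Or.inr rfl))))))
  have hC1K : C1 ∈ K := by
    rw [hC1']; exact Ideal.sub_mem _ hxyK (Ideal.mul_mem_left _ _ hyK)
  have hC2K : C2 ∈ K := by
    rw [hC2']; exact Ideal.add_mem _ hxyK (Ideal.mul_mem_left _ _ hyK)
  have hfA : f - p * A1 ∈ K := by
    have e : f - p * A1 = q1 * C1 + r1 * z := by rw [hfw1, ← hqr1]; ring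
    rw [e]
    exact Ideal.add_mem _ (Ideal.mul_mem_left _ _ hC1K) (Ideal.mul_mem_left _ _ hzK)
  have hfB : f - p' * B1 ∈ K := by
    have e : f - p' * B1 = q2 * C2 + r2 * z := by rw [hfw2, ← hqr2]; ring
    rw [e]
    exact Ideal.add_mem _ (Ideal.mul_mem_left _ _ hC2K) (Ideal.mul_mem_left _ _ hzK)
  have hABK : p * A1 - p' * B1 ∈ K := by
    have e : p * A1 - p' * B1 = (f - p' * B1) - (f - p * A1) := by ring
    rw [e]; exact Ideal.sub_mem _ hfB hfA
  -- lift to the power series ring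
  set relI := Ideal.span {(MvPowerSeries.X 2 : MvPowerSeries (Fin 3) k) ^ 2
      + MvPowerSeries.X 0 ^ 2 * MvPowerSeries.X 1 + MvPowerSeries.X 1 ^ (n - 1)} with hrelI
  set L := Ideal.span {MvPowerSeries.X 0 ^ 2, MvPowerSeries.X 0 * MvPowerSeries.X 1,
      MvPowerSeries.X 1 ^ (m + 2), (MvPowerSeries.X 2 : MvPowerSeries (Fin 3) k)} with hL'
  have hg0L : (MvPowerSeries.X 0 ^ 2 : MvPowerSeries (Fin 3) k) ∈ L :=
    Ideal.subset_span (Set.mem_insert _ _)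
  have hg1L : (MvPowerSeries.X 0 * MvPowerSeries.X 1 : MvPowerSeries (Fin 3) k) ∈ L :=
    Ideal.subset_span (Set.mem_insert_iff.mpr (Or.inr (Set.mem_insert _ _)))
  have hg2L : (MvPowerSeries.X 1 ^ (m + 2) : MvPowerSeries (Fin 3) k) ∈ L :=
    Ideal.subset_span (Set.mem_insert_iff.mpr (Or.inr
      (Set.mem_insert_iff.mpr (Or.inr (Set.mem_insert _ _)))))
  have hg3L : (MvPowerSeries.X 2 : MvPowerSeries (Fin 3) k) ∈ L :=
    Ideal.subset_span (Set.mem_insert_iff.mpr (Or.inr (Set.mem_insert_iff.mpr (Or.inr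
      (Set.mem_insert_iff.mpr (Or.inr rfl))))))
  have hmapL : Ideal.map (Ideal.Quotient.mk relI) L = K := by
    rw [hL', Ideal.map_span, hK']
    congr 1
    simp only [Set.image_insert_eq, Set.image_singleton, map_pow, map_mul]
    rw [hx, hy, hz]
    simp only [x14, y14, z14]
    rfl
  have hrelmem : ((MvPowerSeries.X 2 : MvPowerSeries (Fin 3) k) ^ 2
      + MvPowerSeries.X 0 ^ 2 * MvPowerSeries.X 1 + MvPowerSeries.X 1 ^ (n - 1)) ∈ L := by
    have hn1 : n - 1 = (m + 1) + (m + 2) := by omega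
    rw [hn1, pow_add, sq (MvPowerSeries.X 2 : MvPowerSeries (Fin 3) k)]
    exact Ideal.add_mem _ (Ideal.add_mem _ (Ideal.mul_mem_left _ _ hg3L)
      (Ideal.mul_mem_right _ _ hg0L)) (Ideal.mul_mem_left _ _ hg2L)
  have hkerle : relI ≤ L := by
    rw [hrelI, Ideal.span_le, Set.singleton_subset_iff]
    exact hrelmem
  have hcomap : Ideal.comap (Ideal.Quotient.mk relI) K = L := by
    rw [← hmapL, Ideal.comap_map_of_surjective _ Ideal.Quotient.mk_surjective,
      ← RingHom.ker_eq_comap_bot, Ideal.mk_ker]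
    exact sup_eq_left.mpr hkerle
  obtain ⟨P, hP⟩ := Ideal.Quotient.mk_surjective p
  obtain ⟨P', hP'⟩ := Ideal.Quotient.mk_surjective p'
  set M1 := monomial (single (1 : Fin 3) (m + 1)) i with hM1'
  have hM1 : M1 = MvPowerSeries.C i * MvPowerSeries.X 1 ^ (m + 1) := by
    rw [hM1', X_pow_eq,
      show MvPowerSeries.C i = monomial (0 : Fin 3 →₀ ℕ) i from rfl,
      monomial_mul_monomial, zero_add, mul_one]
  set At := MvPowerSeries.X 0 + M1 with hAt'
  set Bt := MvPowerSeries.X 0 - M1 with hBt'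
  have hmkA : Ideal.Quotient.mk relI At = A1 := by
    rw [hAt', hM1, map_add, map_mul, map_pow, hA1', hx, hy, hii]
    simp only [x14, y14, c14]
    rfl
  have hmkB : Ideal.Quotient.mk relI Bt = B1 := by
    rw [hBt', hM1, map_sub, map_mul, map_pow, hB1', hx, hy, hii]
    simp only [x14, y14, c14]
    rfl
  have hFL : P * At - P' * Bt ∈ L := by
    rw [← hcomap, Ideal.mem_comap, map_sub, map_mul, map_mul, hP, hP', hmkA, hmkB]
    exact hABK
  rw [hL'] at hFL
  have hvan := vanish_on_L m _ hFL
  have key0 : ∀ Pp : MvPowerSeries (Fin 3) k,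
      coeff (single (0 : Fin 3) 1) (Pp * MvPowerSeries.X 0) = coeff 0 Pp := by
    intro Pp
    rw [show (MvPowerSeries.X 0 : MvPowerSeries (Fin 3) k)
        = monomial (single 0 1) 1 from rfl, coeff_mul_monomial, if_pos le_rfl,
      tsub_self, mul_one]
  have key1 : ∀ Pp : MvPowerSeries (Fin 3) k,
      coeff (single (0 : Fin 3) 1) (Pp * M1) = 0 := by
    intro Pp
    rw [hM1', coeff_mul_monomial, if_neg]
    intro h
    rw [single_le_iff] at h
    simp at h
  have key2 : ∀ Pp : MvPowerSeries (Fin 3) k,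
      coeff (single (1 : Fin 3) (m + 1)) (Pp * MvPowerSeries.X 0) = 0 := by
    intro Pp
    rw [show (MvPowerSeries.X 0 : MvPowerSeries (Fin 3) k)
        = monomial (single 0 1) 1 from rfl, coeff_mul_monomial, if_neg]
    intro h
    rw [single_le_iff] at h
    simp at h
  have key3 : ∀ Pp : MvPowerSeries (Fin 3) k,
      coeff (single (1 : Fin 3) (m + 1)) (Pp * M1) = coeff 0 Pp * i := by
    intro Pp
    rw [hM1', coeff_mul_monomial, if_pos le_rfl, tsub_self]
  have E1 : coeff 0 P - coeff 0 P' = 0 := by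
    have h01 := hvan.2
    rw [map_sub, hAt', hBt', mul_add, mul_sub, map_add, map_sub, key0, key0, key1, key1,
      add_zero, sub_zero] at h01
    exact h01
  have E2 : coeff 0 P * i + coeff 0 P' * i = 0 := by
    have h1m := hvan.1 (m + 1) le_rfl
    rw [map_sub, hAt', hBt', mul_add, mul_sub, map_add, map_sub, key2, key2, key3, key3,
      zero_add, zero_sub, sub_neg_eq_add] at h1m
    exact h1m
  have hc0 : coeff 0 P = 0 := by
    have hsum : coeff 0 P + coeff 0 P' = 0 := by
      rcases mul_eq_zero.mp (show (coeff 0 P + coeff 0 P') * i = 0 by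
        linear_combination E2) with h | h
      · exact h
      · exact absurd h hi0
    have h2c : (2 : k) * coeff 0 P = 0 := by linear_combination E1 + hsum
    rcases mul_eq_zero.mp h2c with h | h
    · exact absurd h h2
    · exact h
  have hcc : MvPowerSeries.constantCoeff P = 0 := by
    rw [← coeff_zero_eq_constantCoeff_apply]; exact hc0
  obtain ⟨g0, g1, g2, hdec⟩ := mem_span_X_of_constantCoeff_zero P hcc
  have hPAtL : P * At ∈ L := by
    have h0A : MvPowerSeries.X 0 * At ∈ L := by
      have e : MvPowerSeries.X 0 * At = MvPowerSeries.X 0 ^ 2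
          + (MvPowerSeries.C i * MvPowerSeries.X 1 ^ m)
            * (MvPowerSeries.X 0 * MvPowerSeries.X 1) := by
        rw [hAt', hM1]; ring
      rw [e]
      exact Ideal.add_mem _ hg0L (Ideal.mul_mem_left _ _ hg1L)
    have h1A : MvPowerSeries.X 1 * At ∈ L := by
      have e : MvPowerSeries.X 1 * At = MvPowerSeries.X 0 * MvPowerSeries.X 1
          + MvPowerSeries.C i * MvPowerSeries.X 1 ^ (m + 2) := by
        rw [hAt', hM1]; ring
      rw [e]
      exact Ideal.add_mem _ hg1L (Ideal.mul_mem_left _ _ hg2L)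
    have h2A : MvPowerSeries.X 2 * At ∈ L := by
      rw [mul_comm]
      exact Ideal.mul_mem_left _ _ hg3L
    have e : P * At = g0 * (MvPowerSeries.X 0 * At) + g1 * (MvPowerSeries.X 1 * At)
        + g2 * (MvPowerSeries.X 2 * At) := by
      rw [hdec]; ring
    rw [e]
    exact Ideal.add_mem _ (Ideal.add_mem _ (Ideal.mul_mem_left _ _ h0A)
      (Ideal.mul_mem_left _ _ h1A)) (Ideal.mul_mem_left _ _ h2A)
  have hpAK : p * A1 ∈ K := by
    have e : p * A1 = Ideal.Quotient.mk relI (P * At) := by rw [map_mul, hP, hmkA]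
    rw [e, ← hmapL]
    exact Ideal.mem_map_of_mem _ hPAtL
  have e : f = (f - p * A1) + p * A1 := by ring
  rw [e]
  exact Ideal.add_mem _ hfA hpAK
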